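/- For all integers N ≥ 0, ∑_{k=0}^{N} S_{-1/2}(N,k) · k! · (-1)^k/(k+1) = (2^{1-N} - 1) B_N, where B_N is the N-th Bernoulli number. -/

import Mathlib

/-- Non-central Stirling numbers of the second kind with parameter `α`. -/
def Snc (α : ℚ) : ℕ → ℕ → ℚ
  | 0, 0 => 1
  | 0, _ + 1 => 0
  | n + 1, 0 => (-α) ^ (n + 1)
  | n + 1, k + 1 => Snc α n k + ((k + 1 : ℚ) - α) * Snc α n (k + 1)

open Finset

lemma snc_succ (α : ℚ) (n k : ℕ) :
    Snc α (n+1) (k+1) = Snc α n k + (((k : ℚ) + 1) - α) * Snc α n (k+1) := rfl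

lemma snc_col0 (α : ℚ) : ∀ n, Snc α n 0 = (-α) ^ n
  | 0 => by simp [Snc]
  | _ + 1 => rfl

lemma snc_zero (α : ℚ) (n : ℕ) : ∀ k, n < k → Snc α n k = 0 := by
  induction n with
  | zero =>
    intro k hk
    match k, hk with
    | k + 1, _ => rfl
  | succ n ih =>
    intro k hk
    match k, hk with
    | k + 1, hk =>
      rw [snc_succ, ih k (by omega), ih (k+1) (by omega)]
      ring

lemma binom_sum_split (x : ℕ → ℚ) (n : ℕ) :
    ∑ i ∈ Finset.range (n+1), (((n+1).choose i : ℕ) : ℚ) * x i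
      = (∑ j ∈ Finset.range n, ((n.choose j : ℕ) : ℚ) * x (j+1))
        + ((∑ i ∈ Finset.range n, ((n.choose i : ℕ) : ℚ) * x i) + x n) := by
  calc ∑ i ∈ Finset.range (n+1), (((n+1).choose i : ℕ) : ℚ) * x i
      = (∑ j ∈ Finset.range n, (((n+1).choose (j+1) : ℕ) : ℚ) * x (j+1))
          + (((n+1).choose 0 : ℕ) : ℚ) * x 0 := Finset.sum_range_succ' _ n
    _ = (∑ j ∈ Finset.range n,
          (((n.choose j : ℕ) : ℚ) * x (j+1) + ((n.choose (j+1) : ℕ) : ℚ) * x (j+1))) + x 0 := by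
        refine congrArg₂ (· + ·) (Finset.sum_congr rfl fun j _ => ?_) (by norm_num)
        rw [Nat.choose_succ_succ]
        push_cast
        ring
    _ = (∑ j ∈ Finset.range n, ((n.choose j : ℕ) : ℚ) * x (j+1))
          + ((∑ j ∈ Finset.range n, ((n.choose (j+1) : ℕ) : ℚ) * x (j+1)) + x 0) := by
        rw [Finset.sum_add_distrib]; ring
    _ = (∑ j ∈ Finset.range n, ((n.choose j : ℕ) : ℚ) * x (j+1))
          + (∑ i ∈ Finset.range (n+1), ((n.choose i : ℕ) : ℚ) * x i) := by
        rw [Finset.sum_range_succ' (fun i => ((n.choose i : ℕ) : ℚ) * x i) n]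
        norm_num
    _ = (∑ j ∈ Finset.range n, ((n.choose j : ℕ) : ℚ) * x (j+1))
          + ((∑ i ∈ Finset.range n, ((n.choose i : ℕ) : ℚ) * x i) + x n) := by
        rw [Finset.sum_range_succ]
        norm_num

lemma sncW (α : ℚ) : ∀ n k, ∑ i ∈ Finset.range n, ((n.choose i : ℕ) : ℚ) * Snc α i k
    = ((k : ℚ) + 1) * Snc α n (k+1) := by
  intro n
  induction n with
  | zero =>
    intro k
    simp [snc_zero α 0 (k+1) (by omega)]
  | succ n ih =>
    intro k
    rw [binom_sum_split (fun i => Snc α i k) n]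
    rcases k with _ | m
    · have hA : ∑ j ∈ Finset.range n, ((n.choose j : ℕ) : ℚ) * Snc α (j+1) 0
          = -α * ∑ j ∈ Finset.range n, ((n.choose j : ℕ) : ℚ) * Snc α j 0 := by
        rw [Finset.mul_sum]
        refine Finset.sum_congr rfl fun j _ => ?_
        rw [snc_col0 α (j+1), snc_col0 α j]
        ring
      rw [hA, ih 0, snc_succ α n 0]
      push_cast
      ring
    · have hA : ∑ j ∈ Finset.range n, ((n.choose j : ℕ) : ℚ) * Snc α (j+1) (m+1)
          = (((m : ℚ) + 1) * Snc α n (m+1))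
            + (((m : ℚ) + 1) - α) * ((((m+1 : ℕ) : ℚ) + 1) * Snc α n (m+2)) := by
        calc ∑ j ∈ Finset.range n, ((n.choose j : ℕ) : ℚ) * Snc α (j+1) (m+1)
            = ∑ j ∈ Finset.range n, (((n.choose j : ℕ) : ℚ) * Snc α j m
                + (((m : ℚ) + 1) - α) * (((n.choose j : ℕ) : ℚ) * Snc α j (m+1))) := by
              refine Finset.sum_congr rfl fun j _ => ?_
              rw [snc_succ]
              ring
          _ = (∑ j ∈ Finset.range n, ((n.choose j : ℕ) : ℚ) * Snc α j m)
                + (((m : ℚ) + 1) - α) * ∑ j ∈ Finset.range n, ((n.choose j : ℕ) : ℚ) * Snc α j (m+1) := by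
              rw [Finset.sum_add_distrib, ← Finset.mul_sum]
          _ = _ := by rw [ih m, ih (m+1)]
      rw [hA, ih (m+1), snc_succ α n (m+1)]
      push_cast
      ring

lemma sncJ : ∀ n : ℕ, ∑ k ∈ Finset.range n, (-1 : ℚ)^k * (Nat.factorial k : ℚ) * Snc (-1/2) n (k+1)
    = 2 * n * (1/2 : ℚ)^n := by
  intro n
  induction n with
  | zero => simp
  | succ n ih =>
    set c : ℕ → ℚ := fun m => (-1 : ℚ)^m * (Nat.factorial m : ℚ) * Snc (-1/2) n m with hc
    calc ∑ k ∈ Finset.range (n+1), (-1 : ℚ)^k * (Nat.factorial k : ℚ) * Snc (-1/2) (n+1) (k+1)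
        = ∑ k ∈ Finset.range (n+1),
            ((c k - c (k+1)) + (1/2) * ((-1 : ℚ)^k * (Nat.factorial k : ℚ) * Snc (-1/2) n (k+1))) := by
          refine Finset.sum_congr rfl fun k _ => ?_
          rw [snc_succ]
          simp only [hc]
          push_cast [Nat.factorial_succ]
          ring
      _ = (c 0 - c (n+1))
            + (1/2) * ∑ k ∈ Finset.range (n+1), (-1 : ℚ)^k * (Nat.factorial k : ℚ) * Snc (-1/2) n (k+1) := by
          rw [Finset.sum_add_distrib, Finset.sum_range_sub' c (n+1), ← Finset.mul_sum]
      _ = 2 * (n+1 : ℕ) * (1/2 : ℚ)^(n+1) := by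
          rw [Finset.sum_range_succ]
          simp only [hc]
          rw [snc_zero (-1/2) n (n+1) (by omega), snc_col0, ih]
          have h5 : (-(-1/2 : ℚ)) ^ n = (1/2 : ℚ)^n := by norm_num
          rw [h5]
          push_cast [Nat.factorial_zero]
          ring

def fS (N : ℕ) : ℚ :=
  ∑ k ∈ Finset.range (N + 1), Snc (-1/2) N k * (Nat.factorial k : ℚ) * (-1) ^ k / (k + 1)

def gB (N : ℕ) : ℚ := ((2 : ℚ) ^ (1 - (N : ℤ)) - 1) * bernoulli N

lemma fS_eq (n i : ℕ) (h : i < n) :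
    fS i = ∑ k ∈ Finset.range n, Snc (-1/2) i k * (Nat.factorial k : ℚ) * (-1) ^ k / (k + 1) := by
  rw [fS]
  refine Finset.sum_subset (Finset.range_subset_range.mpr (by omega)) fun k _ hk => ?_
  have hik : i < k := by
    simp only [Finset.mem_range, not_lt] at hk
    omega
  rw [snc_zero (-1/2) i k hik]
  simp

lemma conv_f (n : ℕ) : ∑ i ∈ Finset.range n, ((n.choose i : ℕ) : ℚ) * fS i = 2 * n * (1/2 : ℚ)^n := by
  calc ∑ i ∈ Finset.range n, ((n.choose i : ℕ) : ℚ) * fS i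
      = ∑ i ∈ Finset.range n, ∑ k ∈ Finset.range n,
          ((n.choose i : ℕ) : ℚ) * (Snc (-1/2) i k * (Nat.factorial k : ℚ) * (-1) ^ k / (k + 1)) := by
        refine Finset.sum_congr rfl fun i hi => ?_
        rw [fS_eq n i (Finset.mem_range.mp hi), Finset.mul_sum]
    _ = ∑ k ∈ Finset.range n, ∑ i ∈ Finset.range n,
          ((n.choose i : ℕ) : ℚ) * (Snc (-1/2) i k * (Nat.factorial k : ℚ) * (-1) ^ k / (k + 1)) :=
        Finset.sum_comm
    _ = ∑ k ∈ Finset.range n, (-1 : ℚ)^k * (Nat.factorial k : ℚ) * Snc (-1/2) n (k+1) := by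
        refine Finset.sum_congr rfl fun k _ => ?_
        have h1 : ((k : ℚ) + 1) ≠ 0 := by positivity
        have h2 : ∑ i ∈ Finset.range n,
              ((n.choose i : ℕ) : ℚ) * (Snc (-1/2) i k * (Nat.factorial k : ℚ) * (-1) ^ k / (k + 1))
            = ((Nat.factorial k : ℚ) * (-1)^k / ((k : ℚ) + 1))
                * ∑ i ∈ Finset.range n, ((n.choose i : ℕ) : ℚ) * Snc (-1/2) i k := by
          rw [Finset.mul_sum]
          refine Finset.sum_congr rfl fun i _ => ?_
          ring
        rw [h2, sncW]
        field_simp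
    _ = 2 * n * (1/2 : ℚ)^n := sncJ n

lemma gB_eq (i : ℕ) : gB i = (2 * (1/2 : ℚ)^i - 1) * bernoulli i := by
  rw [gB]
  congr 1
  rw [zpow_sub₀ (by norm_num : (2:ℚ) ≠ 0), zpow_one, zpow_natCast, div_eq_mul_inv, one_div,
    inv_pow]

lemma bern_pow2_sum (n : ℕ) (hn : 1 ≤ n) :
    ∑ i ∈ Finset.range n, bernoulli i * ((n.choose i : ℕ) : ℚ) * (2:ℚ)^(n - i)
      = (n : ℚ) * (1 + if n = 1 then 1 else 0) := by
  have hp := sum_range_pow 2 (n - 1)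
  have hn' : n - 1 + 1 = n := Nat.sub_add_cancel hn
  rw [hn'] at hp
  have hL : ∑ k ∈ Finset.range 2, (k : ℚ) ^ (n - 1) = 1 + if n = 1 then 1 else 0 := by
    rw [Finset.sum_range_succ, Finset.sum_range_one]
    push_cast
    rcases Nat.lt_or_ge 1 n with h | h
    · rw [if_neg (show ¬ n = 1 by omega), zero_pow (show n - 1 ≠ 0 by omega), one_pow]
      ring
    · have h1 : n = 1 := by omega
      subst h1
      norm_num
  rw [hL] at hp
  have hne : (n : ℚ) ≠ 0 := by positivity
  have h6 := hp.symm
  rw [← Finset.sum_div] at h6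
  field_simp at h6
  have h7 : ((n - 1 : ℕ) : ℚ) + 1 = n := by rw [Nat.cast_sub hn]; push_cast; ring
  simp only [Nat.cast_ofNat, h7] at h6
  rw [h6]

lemma conv_g (n : ℕ) (hn : 1 ≤ n) :
    ∑ i ∈ Finset.range n, ((n.choose i : ℕ) : ℚ) * gB i = 2 * n * (1/2 : ℚ)^n := by
  have step : ∀ i ∈ Finset.range n, ((n.choose i : ℕ) : ℚ) * gB i
      = 2 * (1/2 : ℚ)^n * (bernoulli i * ((n.choose i : ℕ) : ℚ) * (2:ℚ)^(n - i))
        - ((n.choose i : ℕ) : ℚ) * bernoulli i := by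
    intro i hi
    have hi' : i ≤ n := le_of_lt (Finset.mem_range.mp hi)
    have hsplit : ((1:ℚ)/2)^n = (1/2 : ℚ)^(n-i) * (1/2 : ℚ)^i := by
      rw [← pow_add, Nat.sub_add_cancel hi']
    have h1 : ((1:ℚ)/2)^(n-i) * (2:ℚ)^(n-i) = 1 := by
      rw [← mul_pow]
      norm_num
    rw [gB_eq]
    have h2 : ((1:ℚ)/2)^i = (1/2 : ℚ)^n * (2:ℚ)^(n-i) := by
      calc ((1:ℚ)/2)^i = (((1:ℚ)/2)^(n-i) * (2:ℚ)^(n-i)) * ((1:ℚ)/2)^i := by rw [h1]; ring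
        _ = (1/2 : ℚ)^n * (2:ℚ)^(n-i) := by rw [hsplit]; ring
    rw [h2]
    ring
  rw [Finset.sum_congr rfl step, Finset.sum_sub_distrib, ← Finset.mul_sum,
    bern_pow2_sum n hn, sum_bernoulli]
  rcases Nat.lt_or_ge 1 n with h | h
  · rw [if_neg (show ¬ n = 1 by omega)]
    ring
  · have h1 : n = 1 := by omega
    subst h1
    norm_num

lemma fS_eq_gB : ∀ N, fS N = gB N := by
  intro N
  induction N using Nat.strong_induction_on with
  | _ N ih =>
    match N with
    | 0 =>
      have h1 : fS 0 = 1 := by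
        rw [fS]
        rw [Finset.sum_range_one]
        norm_num
        rfl
      have h2 : gB 0 = 1 := by
        rw [gB]
        norm_num
      rw [h1, h2]
    | n + 1 =>
      have h1 := conv_f (n + 2)
      have h2 := conv_g (n + 2) (by omega)
      rw [Finset.sum_range_succ] at h1 h2
      have h3 : ∑ i ∈ Finset.range (n+1), (((n+2).choose i : ℕ) : ℚ) * fS i
          = ∑ i ∈ Finset.range (n+1), (((n+2).choose i : ℕ) : ℚ) * gB i := by
        refine Finset.sum_congr rfl fun i hi => ?_
        rw [ih i (Finset.mem_range.mp hi)]
      have h4 : (((n+2).choose (n+1) : ℕ) : ℚ) * fS (n+1)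
          = (((n+2).choose (n+1) : ℕ) : ℚ) * gB (n+1) := by
        linarith [h1, h2, h3]
      have h5 : (((n+2).choose (n+1) : ℕ) : ℚ) ≠ 0 := by
        have h6 : (n+2).choose (n+1) ≠ 0 := Nat.ne_of_gt (Nat.choose_pos (by omega))
        exact Nat.cast_ne_zero.mpr h6
      exact mul_left_cancel₀ h5 h4

theorem stmt_4 (N : ℕ) :
    ∑ k ∈ Finset.range (N + 1),
        Snc (-1/2) N k * (Nat.factorial k : ℚ) * (-1) ^ k / (k + 1) =
      ((2 : ℚ) ^ (1 - (N : ℤ)) - 1) * bernoulli N := by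
  exact fS_eq_gB N
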